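/- Fix τ ∈ [T] and define f(Z; W_Q, W_K, W_V)[τ] = W_V^⊤ Z^⊤ softmax(Z W_K W_Q^⊤ z_τ) ∈ ℝ^k, where z_τ is the τ-th row of Z (equivalently, row τ of RowSoftmax(Z W_Q (Z W_K)^⊤) Z W_V). Then for any matrices W_Q, Ŵ_Q, W_K, Ŵ_K, W_V, Ŵ_V ∈ ℝ^{d×k} and any Z ∈ ℝ^{T×d} with ‖Z^⊤‖_{2,∞} ≤ 1, every row τ satisfies: ‖f(Z; W_Q, W_K, W_V)[τ] − f(Z; Ŵ_Q, Ŵ_K, Ŵ_V)[τ]‖₂ ≤ 2‖W_V‖₂·‖(W_Q W_K^⊤ − Ŵ_Q Ŵ_K^⊤) Z^⊤‖_{2,∞} + ‖(W_V − Ŵ_V)^⊤ Z^⊤‖_{2,∞}. -/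

import Mathlib

open Matrix
open scoped BigOperators

noncomputable section

/-- Euclidean (ℓ²) norm of a vector. -/
def norm2 {d : ℕ} (v : Fin d → ℝ) : ℝ := Real.sqrt (∑ i, (v i) ^ 2)

/-- The softmax map on ℝ^T. -/
def softmax {T : ℕ} (z : Fin T → ℝ) : Fin T → ℝ :=
  fun t => Real.exp (z t) / ∑ u, Real.exp (z u)

/-- Spectral norm (ℓ² operator norm) of a matrix. -/
def specNorm {a b : ℕ} (M : Matrix (Fin a) (Fin b) ℝ) : ℝ :=
  sSup {r : ℝ | ∃ v : Fin b → ℝ, norm2 v ≤ 1 ∧ r = norm2 (M *ᵥ v)}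

/-- `‖M‖_{2,∞}`: maximum ℓ² norm of a column of `M`. -/
def colMax2 {a b : ℕ} (M : Matrix (Fin a) (Fin b) ℝ) : ℝ :=
  ⨆ j, norm2 (fun i => M i j)

/-- Row `τ` of the self-attention layer output:
`f(Z; W_Q, W_K, W_V)[τ] = W_V^⊤ Z^⊤ softmax(Z W_K W_Q^⊤ z_τ)`. -/
noncomputable def attnRow {T d k : ℕ} (WQ WK WV : Matrix (Fin d) (Fin k) ℝ)
    (Z : Matrix (Fin T) (Fin d) ℝ) (τ : Fin T) : Fin k → ℝ :=
  fun j => ∑ t, softmax ((Z * WK * WQᵀ) *ᵥ Z τ) t * (Z * WV) t j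

open scoped Matrix.Norms.L2Operator in
lemma norm2_eq_norm {d : ℕ} (v : EuclideanSpace ℝ (Fin d)) : norm2 v = ‖v‖ := by
  rw [EuclideanSpace.norm_eq, norm2]
  congr 1
  exact Finset.sum_congr rfl fun i _ => by rw [Real.norm_eq_abs, sq_abs]

open scoped Matrix.Norms.L2Operator in
lemma specNorm_eq_opNorm {a b : ℕ} (M : Matrix (Fin a) (Fin b) ℝ) : specNorm M = ‖M‖ := by
  rw [Matrix.l2_opNorm_def, ← ContinuousLinearMap.sSup_unitClosedBall_eq_norm]
  unfold specNorm
  congr 1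
  ext r
  constructor
  · rintro ⟨v, hv, rfl⟩
    refine ⟨WithLp.toLp 2 v, ?_, ?_⟩
    · rw [Metric.mem_closedBall, dist_zero_right, ← norm2_eq_norm]; exact hv
    · simp only [LinearEquiv.trans_apply, LinearMap.coe_toContinuousLinearMap',
        Matrix.toEuclideanLin_apply]
      rw [← norm2_eq_norm]
  · rintro ⟨v, hv, rfl⟩
    refine ⟨v, ?_, ?_⟩
    · rw [Metric.mem_closedBall, dist_zero_right, ← norm2_eq_norm] at hv; exact hv
    · simp only [LinearEquiv.trans_apply, LinearMap.coe_toContinuousLinearMap',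
        Matrix.toEuclideanLin_apply]
      rw [← norm2_eq_norm]

lemma norm2_nonneg {d : ℕ} (v : Fin d → ℝ) : 0 ≤ norm2 v := Real.sqrt_nonneg _

open scoped Matrix.Norms.L2Operator in
lemma specNorm_nonneg {a b : ℕ} (M : Matrix (Fin a) (Fin b) ℝ) : 0 ≤ specNorm M := by
  rw [specNorm_eq_opNorm]; exact norm_nonneg M

open scoped Matrix.Norms.L2Operator in
lemma specNorm_transpose {a b : ℕ} (M : Matrix (Fin a) (Fin b) ℝ) :
    specNorm Mᵀ = specNorm M := by
  rw [specNorm_eq_opNorm, specNorm_eq_opNorm, ← Matrix.l2_opNorm_conjTranspose M]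
  congr 1

open scoped Matrix.Norms.L2Operator in
lemma norm2_mulVec_le {a b : ℕ} (M : Matrix (Fin a) (Fin b) ℝ) (v : Fin b → ℝ) :
    norm2 (M *ᵥ v) ≤ specNorm M * norm2 v := by
  rw [specNorm_eq_opNorm]
  calc norm2 (M *ᵥ v) = ‖(EuclideanSpace.equiv (Fin a) ℝ).symm
        (M *ᵥ ((EuclideanSpace.equiv (Fin b) ℝ).symm v))‖ := by
        rw [← norm2_eq_norm]; rfl
    _ ≤ ‖M‖ * ‖(EuclideanSpace.equiv (Fin b) ℝ).symm v‖ := Matrix.l2_opNorm_mulVec M _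
    _ = ‖M‖ * norm2 v := by rw [← norm2_eq_norm]; rfl

lemma norm2_col_le_colMax2 {a b : ℕ} (M : Matrix (Fin a) (Fin b) ℝ) (j : Fin b) :
    norm2 (fun i => M i j) ≤ colMax2 M := by
  exact le_ciSup (f := fun j => norm2 (fun i => M i j))
    (Set.Finite.bddAbove (Set.finite_range _)) j

lemma abs_dot_le {d : ℕ} (x y : Fin d → ℝ) : |∑ i, x i * y i| ≤ norm2 x * norm2 y := by
  have h := abs_real_inner_le_norm ((EuclideanSpace.equiv (Fin d) ℝ).symm x)
    ((EuclideanSpace.equiv (Fin d) ℝ).symm y)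
  rw [← norm2_eq_norm, ← norm2_eq_norm] at h
  refine le_trans (le_of_eq ?_) h
  congr 1
  simp [PiLp.inner_apply, mul_comm]

lemma norm2_sum_le {T k : ℕ} (c : Fin T → ℝ) (v : Fin T → (Fin k → ℝ)) :
    norm2 (fun j => ∑ t, c t * v t j) ≤ ∑ t, |c t| * norm2 (v t) := by
  have he : (fun j => ∑ t, c t * v t j)
      = ((∑ t, c t • ((EuclideanSpace.equiv (Fin k) ℝ).symm (v t)))
          : EuclideanSpace ℝ (Fin k)) := by
    funext j
    rw [WithLp.ofLp_sum, Finset.sum_apply]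
    rfl
  rw [he, norm2_eq_norm]
  refine (norm_sum_le _ _).trans (Finset.sum_le_sum fun t _ => ?_)
  rw [norm_smul, Real.norm_eq_abs, ← norm2_eq_norm]
  rfl

lemma norm2_add_le {k : ℕ} (u v : Fin k → ℝ) :
    norm2 (fun j => u j + v j) ≤ norm2 u + norm2 v := by
  have := norm_add_le ((EuclideanSpace.equiv (Fin k) ℝ).symm u)
    ((EuclideanSpace.equiv (Fin k) ℝ).symm v)
  rw [← norm2_eq_norm, ← norm2_eq_norm, ← norm2_eq_norm] at this
  exact this

lemma exp_key {t : ℝ} (ht : 0 ≤ t) : 2 * (Real.exp t - 1) ≤ t * (1 + Real.exp t) := by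
  set f : ℝ → ℝ := fun s => s * (1 + Real.exp s) - 2 * (Real.exp s - 1) with hf
  have hderiv : ∀ s : ℝ, HasDerivAt f (1 + (s - 1) * Real.exp s) s := by
    intro s
    have h1 : HasDerivAt (fun s : ℝ => s * (1 + Real.exp s))
        (1 * (1 + Real.exp s) + s * (0 + Real.exp s)) s :=
      (hasDerivAt_id s).mul ((hasDerivAt_const s 1).add (Real.hasDerivAt_exp s))
    have h2 : HasDerivAt (fun s : ℝ => 2 * (Real.exp s - 1)) (2 * Real.exp s) s := by
      simpa using ((Real.hasDerivAt_exp s).sub_const 1).const_mul 2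
    have := h1.sub h2
    refine this.congr_deriv ?_
    ring
  have hd0 : ∀ s : ℝ, 0 ≤ 1 + (s - 1) * Real.exp s := by
    intro s
    rcases le_or_gt 1 s with h | h
    · have : 0 ≤ (s - 1) * Real.exp s := mul_nonneg (by linarith) (Real.exp_pos s).le
      linarith
    · have h1 : 1 - s ≤ Real.exp (-s) := by
        have := Real.add_one_le_exp (-s); linarith
      have h2 : (1 - s) * Real.exp s ≤ Real.exp (-s) * Real.exp s :=
        mul_le_mul_of_nonneg_right h1 (Real.exp_pos s).le
      rw [← Real.exp_add] at h2
      simp at h2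
      nlinarith [Real.exp_pos s]
  have hmono : MonotoneOn f (Set.Ici (0:ℝ)) := by
    apply monotoneOn_of_deriv_nonneg (convex_Ici 0)
    · exact (Continuous.continuousOn (by continuity))
    · intro x hx
      exact (hderiv x).differentiableAt.differentiableWithinAt
    · intro x hx
      rw [(hderiv x).deriv]
      exact hd0 x
  have := hmono (Set.self_mem_Ici) (Set.mem_Ici.mpr ht) ht
  simp [hf] at this
  linarith

lemma exp_trapezoid {x y : ℝ} (h : x ≤ y) :
    Real.exp y - Real.exp x ≤ (y - x) * (Real.exp x + Real.exp y) / 2 := by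
  have key := exp_key (sub_nonneg.mpr h)
  have hx := Real.exp_pos x
  have hey : Real.exp y = Real.exp x * Real.exp (y - x) := by
    rw [← Real.exp_add]; ring_nf
  nlinarith [Real.exp_pos (y - x)]

lemma abs_exp_sub_exp (x y : ℝ) :
    |Real.exp x - Real.exp y| ≤ |x - y| * (Real.exp x + Real.exp y) / 2 := by
  rcases le_total x y with h | h
  · rw [abs_sub_comm, abs_of_nonneg (sub_nonneg.mpr (Real.exp_le_exp.mpr h)),
      abs_sub_comm, abs_of_nonneg (sub_nonneg.mpr h)]
    have := exp_trapezoid h; linarith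
  · rw [abs_of_nonneg (sub_nonneg.mpr (Real.exp_le_exp.mpr h)),
      abs_of_nonneg (sub_nonneg.mpr h)]
    have : Real.exp x - Real.exp y ≤ (x - y) * (Real.exp y + Real.exp x) / 2 := exp_trapezoid h
    linarith

lemma softmax_nonneg {T : ℕ} (z : Fin T → ℝ) (t : Fin T) : 0 ≤ softmax z t :=
  div_nonneg (Real.exp_pos _).le (Finset.sum_nonneg fun _ _ => (Real.exp_pos _).le)

lemma sum_exp_pos {T : ℕ} [Nonempty (Fin T)] (z : Fin T → ℝ) :
    0 < ∑ u, Real.exp (z u) :=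
  Finset.sum_pos (fun u _ => Real.exp_pos _) Finset.univ_nonempty

lemma softmax_sum_one {T : ℕ} [Nonempty (Fin T)] (z : Fin T → ℝ) :
    ∑ t, softmax z t = 1 := by
  simp only [softmax]; rw [← Finset.sum_div, div_self (sum_exp_pos z).ne']

lemma softmax_l1 {T : ℕ} [Nonempty (Fin T)] (a b : Fin T → ℝ) {ε : ℝ}
    (h : ∀ t, |a t - b t| ≤ ε) :
    ∑ t, |softmax a t - softmax b t| ≤ 2 * ε := by
  have hε : 0 ≤ ε := le_trans (abs_nonneg _) (h (Classical.arbitrary _))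
  set Sa := ∑ u, Real.exp (a u) with hSa
  set Sb := ∑ u, Real.exp (b u) with hSb
  have hSa0 : 0 < Sa := sum_exp_pos a
  have hSb0 : 0 < Sb := sum_exp_pos b
  have key : ∀ t, |softmax a t - softmax b t| ≤
      (∑ u, ε * (Real.exp (a t) * Real.exp (b u) + Real.exp (b t) * Real.exp (a u)))
        / (Sa * Sb) := by
    intro t
    have e1 : softmax a t - softmax b t =
        (∑ u, (Real.exp (a t + b u) - Real.exp (b t + a u))) / (Sa * Sb) := by
      rw [softmax, softmax]
      rw [div_sub_div _ _ hSa0.ne' hSb0.ne']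
      congr 1
      rw [hSa, hSb, Finset.mul_sum, Finset.sum_mul, ← Finset.sum_sub_distrib]
      exact Finset.sum_congr rfl fun u _ => by rw [Real.exp_add, Real.exp_add]; ring
    rw [e1, abs_div, abs_of_pos (mul_pos hSa0 hSb0)]
    apply (div_le_div_iff_of_pos_right (mul_pos hSa0 hSb0)).mpr
    refine (Finset.abs_sum_le_sum_abs _ _).trans (Finset.sum_le_sum fun u _ => ?_)
    have h1 := abs_exp_sub_exp (a t + b u) (b t + a u)
    have h2 : |a t + b u - (b t + a u)| ≤ 2 * ε := by
      have : a t + b u - (b t + a u) = (a t - b t) - (a u - b u) := by ring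
      rw [this]
      calc |(a t - b t) - (a u - b u)| ≤ |a t - b t| + |a u - b u| := abs_sub _ _
        _ ≤ 2 * ε := by have := h t; have := h u; linarith
    have h3 : |Real.exp (a t + b u) - Real.exp (b t + a u)| ≤
        2 * ε * (Real.exp (a t + b u) + Real.exp (b t + a u)) / 2 := by
      refine h1.trans ?_
      have hpos : 0 ≤ Real.exp (a t + b u) + Real.exp (b t + a u) := by positivity
      have := mul_le_mul_of_nonneg_right h2 hpos
      linarith
    refine h3.trans (le_of_eq ?_)
    rw [Real.exp_add, Real.exp_add]
    ring
  calc ∑ t, |softmax a t - softmax b t|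
      ≤ ∑ t, (∑ u, ε * (Real.exp (a t) * Real.exp (b u)
          + Real.exp (b t) * Real.exp (a u))) / (Sa * Sb) :=
        Finset.sum_le_sum fun t _ => key t
    _ = (∑ t, ∑ u, ε * (Real.exp (a t) * Real.exp (b u)
          + Real.exp (b t) * Real.exp (a u))) / (Sa * Sb) := by
        rw [Finset.sum_div]
    _ = 2 * ε := by
        have e2 : ∀ t, (∑ u, ε * (Real.exp (a t) * Real.exp (b u)
            + Real.exp (b t) * Real.exp (a u)))
            = ε * (Real.exp (a t) * Sb + Real.exp (b t) * Sa) := by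
          intro t
          rw [← Finset.mul_sum]
          congr 1
          rw [Finset.sum_add_distrib, ← Finset.mul_sum, ← Finset.mul_sum, hSa, hSb]
        simp only [e2]
        rw [← Finset.mul_sum, Finset.sum_add_distrib, ← Finset.sum_mul, ← Finset.sum_mul,
          ← hSa, ← hSb]
        field_simp
        ring

/-- Lipschitzness of a self-attention row in the weights. -/
theorem attention_lipschitz_in_weights {T d k : ℕ}
    (WQ WQ' WK WK' WV WV' : Matrix (Fin d) (Fin k) ℝ)
    (Z : Matrix (Fin T) (Fin d) ℝ) (hZ : colMax2 Zᵀ ≤ 1) (τ : Fin T) :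
    norm2 (fun j => attnRow WQ WK WV Z τ j - attnRow WQ' WK' WV' Z τ j) ≤
      2 * specNorm WV * colMax2 ((WQ * WKᵀ - WQ' * WK'ᵀ) * Zᵀ)
        + colMax2 ((WV - WV')ᵀ * Zᵀ) := by
  classical
  haveI : Nonempty (Fin T) := ⟨τ⟩
  set εa := colMax2 ((WQ * WKᵀ - WQ' * WK'ᵀ) * Zᵀ) with hεa
  set εv := colMax2 ((WV - WV')ᵀ * Zᵀ) with hεv
  set sa : Fin T → ℝ := (Z * WK * WQᵀ) *ᵥ Z τ with hsa
  set sb : Fin T → ℝ := (Z * WK' * WQ'ᵀ) *ᵥ Z τ with hsb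
  set pa := softmax sa with hpa
  set pb := softmax sb with hpb
  -- the row of Z has norm at most 1
  have hrow : ∀ t : Fin T, norm2 (Z t) ≤ 1 := fun t =>
    le_trans (norm2_col_le_colMax2 Zᵀ t) hZ
  -- score difference bound
  have score_eq : ∀ (A B : Matrix (Fin d) (Fin k) ℝ) (t : Fin T),
      ((Z * B * Aᵀ) *ᵥ Z τ) t = ∑ j, Z τ j * ((A * Bᵀ * Zᵀ) j t) := by
    intro A B t
    simp only [Matrix.mulVec, dotProduct, Matrix.mul_apply, Matrix.transpose_apply,
      Finset.sum_mul, Finset.mul_sum]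
    refine Finset.sum_congr rfl fun x _ => ?_
    rw [Finset.sum_comm]
    exact Finset.sum_congr rfl fun x1 _ => Finset.sum_congr rfl fun i _ => by ring
  have hscore : ∀ t, |sa t - sb t| ≤ εa := by
    intro t
    have e1 : sa t - sb t =
        ∑ j, Z τ j * (((WQ * WKᵀ - WQ' * WK'ᵀ) * Zᵀ) j t) := by
      rw [hsa, hsb, score_eq WQ WK t, score_eq WQ' WK' t, ← Finset.sum_sub_distrib]
      refine Finset.sum_congr rfl fun j _ => ?_
      rw [Matrix.sub_mul, Matrix.sub_apply]
      ring
    rw [e1]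
    calc |∑ j, Z τ j * (((WQ * WKᵀ - WQ' * WK'ᵀ) * Zᵀ) j t)|
        ≤ norm2 (Z τ) * norm2 (fun j => ((WQ * WKᵀ - WQ' * WK'ᵀ) * Zᵀ) j t) :=
          abs_dot_le _ _
      _ ≤ 1 * εa :=
          mul_le_mul (hrow τ) (norm2_col_le_colMax2 _ t) (norm2_nonneg _) zero_le_one
      _ = εa := one_mul _
  -- value row bound
  have hval : ∀ t, norm2 (fun j => (Z * WV) t j) ≤ specNorm WV := by
    intro t
    have e : (fun j => (Z * WV) t j) = WVᵀ *ᵥ Z t := by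
      funext j
      simp [Matrix.mul_apply, Matrix.mulVec, dotProduct, Matrix.transpose_apply,
        mul_comm]
    rw [e]
    calc norm2 (WVᵀ *ᵥ Z t) ≤ specNorm WVᵀ * norm2 (Z t) := norm2_mulVec_le _ _
      _ ≤ specNorm WV * 1 := by
          rw [specNorm_transpose]
          exact mul_le_mul_of_nonneg_left (hrow t) (specNorm_nonneg _)
      _ = specNorm WV := mul_one _
  -- value difference bound
  have hvd : ∀ t, norm2 (fun j => (Z * WV) t j - (Z * WV') t j) ≤ εv := by
    intro t
    have e : (fun j => (Z * WV) t j - (Z * WV') t j)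
        = fun j => ((WV - WV')ᵀ * Zᵀ) j t := by
      funext j
      simp only [Matrix.mul_apply, Matrix.sub_apply, Matrix.transpose_apply]
      rw [← Finset.sum_sub_distrib]
      exact Finset.sum_congr rfl fun i _ => by ring
    rw [e]
    exact norm2_col_le_colMax2 _ t
  -- split the difference
  have hsplit : (fun j => attnRow WQ WK WV Z τ j - attnRow WQ' WK' WV' Z τ j)
      = fun j => (∑ t, (pa t - pb t) * (Z * WV) t j)
          + (∑ t, pb t * ((Z * WV) t j - (Z * WV') t j)) := by
    funext j
    simp only [attnRow, ← hsa, ← hsb, ← hpa, ← hpb]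
    rw [← Finset.sum_sub_distrib, ← Finset.sum_add_distrib]
    exact Finset.sum_congr rfl fun t _ => by ring
  rw [hsplit]
  have h1 : norm2 (fun j => ∑ t, (pa t - pb t) * (Z * WV) t j)
      ≤ 2 * specNorm WV * εa := by
    calc norm2 (fun j => ∑ t, (pa t - pb t) * (Z * WV) t j)
        ≤ ∑ t, |pa t - pb t| * norm2 (fun j => (Z * WV) t j) :=
          norm2_sum_le _ _
      _ ≤ ∑ t, |pa t - pb t| * specNorm WV :=
          Finset.sum_le_sum fun t _ =>
            mul_le_mul_of_nonneg_left (hval t) (abs_nonneg _)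
      _ = (∑ t, |pa t - pb t|) * specNorm WV := by rw [Finset.sum_mul]
      _ ≤ (2 * εa) * specNorm WV := by
          refine mul_le_mul_of_nonneg_right ?_ (specNorm_nonneg _)
          exact softmax_l1 sa sb hscore
      _ = 2 * specNorm WV * εa := by ring
  have h2 : norm2 (fun j => ∑ t, pb t * ((Z * WV) t j - (Z * WV') t j)) ≤ εv := by
    calc norm2 (fun j => ∑ t, pb t * ((Z * WV) t j - (Z * WV') t j))
        ≤ ∑ t, |pb t| * norm2 (fun j => (Z * WV) t j - (Z * WV') t j) :=
          norm2_sum_le _ _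
      _ ≤ ∑ t, pb t * εv := by
          refine Finset.sum_le_sum fun t _ => ?_
          rw [abs_of_nonneg (softmax_nonneg _ _)]
          exact mul_le_mul_of_nonneg_left (hvd t) (softmax_nonneg _ _)
      _ = (∑ t, pb t) * εv := by rw [Finset.sum_mul]
      _ = εv := by rw [hpb, softmax_sum_one, one_mul]
  calc norm2 (fun j => (∑ t, (pa t - pb t) * (Z * WV) t j)
        + (∑ t, pb t * ((Z * WV) t j - (Z * WV') t j)))
      ≤ norm2 (fun j => ∑ t, (pa t - pb t) * (Z * WV) t j)
        + norm2 (fun j => ∑ t, pb t * ((Z * WV) t j - (Z * WV') t j)) :=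
        norm2_add_le _ _
    _ ≤ 2 * specNorm WV * εa + εv := add_le_add h1 h2
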